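/- arXiv:2502.15476 — 3 statements merged into one kernel-verified Lean document; each statement's English description precedes it below -/
import Mathlib

section
/- Let S be a finite poset, let X_S be the topological space on S with the Alexandrov topology, and let V be a complete category. Then the category of functors S ⥤ V is equivalent to the category of V-valued sheaves on X_S. The equivalence sends a functor D to the sheaf assigning to each open set U the limit of the restriction of D to U, and sends a sheaf F to the functor of stalks s ↦ F(U_s), where U_s = {t ∈ S : t ≥ s} is the minimal open neighborhood of s. -/
open CategoryTheory CategoryTheory.Limits TopologicalSpace Opposite

universe u v

/-- The Alexandrov topology of a preorder: the open sets are exactly the upper sets. -/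
def alexandrovTopology (S : Type) [Preorder S] : TopologicalSpace S where
  IsOpen U := IsUpperSet U
  isOpen_univ := isUpperSet_univ
  isOpen_inter _ _ := IsUpperSet.inter
  isOpen_sUnion _ h := isUpperSet_sUnion h

/-- The topological space `X_S` associated with a poset `S`. -/
def alexandrovSpace (S : Type) [Preorder S] : TopCat :=
  @TopCat.of S (alexandrovTopology S)

variable (S : Type) [PartialOrder S]

/-- An open set of `X_S`, regarded as a subposet of `S`. -/
def openSubposet (U : Opens (alexandrovSpace S)) : Type := {t : S // t ∈ U.1}

instance (U : Opens (alexandrovSpace S)) : PartialOrder (openSubposet S U) :=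
  Subtype.partialOrder _

/-- The restriction of a diagram `D : S ⥤ V` to an open subset `U` of `X_S`. -/
def restrictDiagram {V : Type u} [Category.{v} V] (D : S ⥤ V)
    (U : Opens (alexandrovSpace S)) : openSubposet S U ⥤ V :=
  (Monotone.functor (f := fun t : openSubposet S U => (t.1 : S)) fun _ _ h => h) ⋙ D

/-- The minimal open neighbourhood `U_s = {t | s ≤ t}` of a point `s` of `X_S`. -/
def minimalOpen (s : S) : Opens (alexandrovSpace S) :=
  ⟨{t : S | s ≤ t}, fun _ _ hab ha => le_trans ha hab⟩

/-!
The minimal open sets `U_s` form a dense subsite of `X_S`: every open set is the union of the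
`U_s` it contains, and since `s ∈ U_s`, a family of opens covers `U_s` only if one of them
contains `U_s`, so the induced topology on `Sᵒᵖ` is the trivial one. The comparison lemma thus
identifies `V`-valued sheaves on `X_S` with presheaves on `Sᵒᵖ`, i.e. with diagrams `S ⥤ V`.
A diagram goes to its right Kan extension along `s ↦ U_s`, whose value at `U` is a limit over
the `U_s ≤ U`, i.e. over the points of `U`.
-/

namespace AlexandrovSheaf

variable {S}

lemma minimalOpen_le_iff {s : S} {U : Opens (alexandrovSpace S)} :
    minimalOpen S s ≤ U ↔ s ∈ U :=
  ⟨fun h => h (le_refl s), fun hs _ ht => U.2 ht hs⟩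

variable (S) in
def minimalOpenFunctor : Sᵒᵖ ⥤ Opens (alexandrovSpace S) where
  obj s := minimalOpen S s.unop
  map f := homOfLE fun _ ht => le_trans f.unop.le ht

instance : (minimalOpenFunctor S).Full where
  map_surjective f := ⟨(homOfLE (minimalOpen_le_iff.mp f.le)).op, rfl⟩

instance : (minimalOpenFunctor S).Faithful where
  map_injective _ := Quiver.Hom.unop_inj (Subsingleton.elim _ _)

instance : (minimalOpenFunctor S).IsCoverDense (Opens.grothendieckTopology _) where
  is_cover U t ht := ⟨minimalOpen S t, homOfLE (minimalOpen_le_iff.mpr ht),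
    ⟨{ obj := op t, lift := 𝟙 _, map := homOfLE (minimalOpen_le_iff.mpr ht) }⟩,
    le_refl (α := S) t⟩

lemma eq_top_of_functorPushforward_mem {s : Sᵒᵖ} {R : Sieve s}
    (hR : R.functorPushforward (minimalOpenFunctor S) ∈
      Opens.grothendieckTopology _ ((minimalOpenFunctor S).obj s)) : R = ⊤ := by
  obtain ⟨W, -, ⟨t, g, h, hg, -⟩, hs⟩ := hR s.unop (le_refl _)
  have hts : t.unop ≤ s.unop := h.le hs
  rw [← Sieve.id_mem_iff_eq_top]
  convert R.downward_closed hg (homOfLE hts).op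
  exact Quiver.Hom.unop_inj (Subsingleton.elim _ _)

instance : (minimalOpenFunctor S).IsDenseSubsite ⊥ (Opens.grothendieckTopology _) where
  functorPushforward_mem_iff {_ R} := by
    rw [GrothendieckTopology.bot_covering]
    refine ⟨eq_top_of_functorPushforward_mem, ?_⟩
    rintro rfl
    rw [Sieve.functorPushforward_top]
    exact GrothendieckTopology.top_mem _ _

def openSubposetToStructuredArrow (U : Opens (alexandrovSpace S)) :
    openSubposet S U ⥤ StructuredArrow (op U) (minimalOpenFunctor S).op where
  obj t := StructuredArrow.mk (Y := op (op t.1)) (homOfLE (minimalOpen_le_iff.mpr t.2)).op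
  map f := StructuredArrow.homMk (homOfLE f.le).op.op

instance (U : Opens (alexandrovSpace S)) : (openSubposetToStructuredArrow U).IsEquivalence where
  faithful := ⟨fun _ => Subsingleton.elim _ _⟩
  full := ⟨fun f => ⟨homOfLE f.right.unop.unop.le, by ext; exact Subsingleton.elim _ _⟩⟩
  essSurj := ⟨fun a => ⟨⟨a.right.unop.unop, minimalOpen_le_iff.mp a.hom.unop.le⟩,
    ⟨StructuredArrow.isoMk (Iso.refl _)⟩⟩⟩

variable (V : Type u) [Category.{v} V] [HasLimitsOfSize.{0, 0} V]

variable (S) in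
noncomputable def diagramSheafEquivalence : (S ⥤ V) ≌ TopCat.Sheaf V (alexandrovSpace S) :=
  (opOpEquivalence S).symm.congrLeft.trans <| (sheafBotEquivalence V).symm.trans <|
    Functor.IsDenseSubsite.sheafEquiv ⊥ (Opens.grothendieckTopology _) (minimalOpenFunctor S) V

noncomputable def diagramSheafEquivalenceFunctorIso : (diagramSheafEquivalence S V).functor ≅
    (opOpEquivalence S).symm.congrLeft.functor ⋙ (sheafBotEquivalence V).inverse ⋙
      (minimalOpenFunctor S).sheafPushforwardCocontinuous V ⊥ (Opens.grothendieckTopology _) :=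
  Functor.isoWhiskerLeft _ <| Functor.isoWhiskerLeft _ <|
    (Functor.IsDenseSubsite.sheafEquiv ⊥ _ _ V).symm.toAdjunction.rightAdjointUniq
      ((minimalOpenFunctor S).sheafAdjunctionCocontinuous V ⊥ _)

noncomputable def diagramSheafEquivalenceFunctorObjIsoLimit (D : S ⥤ V)
    (U : (Opens (alexandrovSpace S))ᵒᵖ) :
    ((diagramSheafEquivalence S V).functor.obj D).obj.obj U ≅
      limit (restrictDiagram S D U.unop) :=
  (sheafToPresheaf _ _ ⋙ (evaluation _ _).obj U).mapIso
      ((diagramSheafEquivalenceFunctorIso V).app D) ≪≫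
    (minimalOpenFunctor S).op.ranObjObjIsoLimit _ U ≪≫
    (Functor.Initial.limitIso (openSubposetToStructuredArrow U.unop) _).symm

noncomputable def diagramSheafEquivalenceInverseObjIso (F : TopCat.Sheaf V (alexandrovSpace S))
    (s : S) :
    ((diagramSheafEquivalence S V).inverse.obj F).obj s ≅ F.obj.obj (op (minimalOpen S s)) :=
  Iso.refl _

end AlexandrovSheaf

theorem diagrams_equivalent_sheaves
    (V : Type u) [Category.{v} V] [HasLimitsOfSize.{0, 0} V] :
    ∃ E : (S ⥤ V) ≌ TopCat.Sheaf V (alexandrovSpace S),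
      (∀ (D : S ⥤ V) (U : (Opens (alexandrovSpace S))ᵒᵖ),
        Nonempty ((E.functor.obj D).val.obj U ≅ limit (restrictDiagram S D U.unop))) ∧
      (∀ (F : TopCat.Sheaf V (alexandrovSpace S)) (s : S),
        Nonempty ((E.inverse.obj F).obj s ≅ F.val.obj (op (minimalOpen S s)))) :=
  ⟨AlexandrovSheaf.diagramSheafEquivalence S V,
    fun D U => ⟨AlexandrovSheaf.diagramSheafEquivalenceFunctorObjIsoLimit V D U⟩,
    fun F s => ⟨AlexandrovSheaf.diagramSheafEquivalenceInverseObjIso V F s⟩⟩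
end

section
/- Let S be a poset, V an abelian category, s ∈ S, and W an injective object of V. Then the cone-shaped sheaf ⟨s⟩W is an injective object of the abelian functor category of diagrams S ⥤ V. -/
/-!
Evaluation at `s` is exact and has the right adjoint `W ↦ (t ↦ ∏_{t ⟶ s} W)`. In a poset the
index type `t ⟶ s` is a singleton if `t ≤ s` and empty otherwise, so this right adjoint sends
`W` to `⟨s⟩W`, and right adjoints of mono-preserving functors preserve injective objects.
-/

open CategoryTheory CategoryTheory.Limits ZeroObject
open scoped Classical

universe u v

variable {S : Type} [PartialOrder S] {V : Type u} [Category.{v} V] [Abelian V]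

/-- The cone-shaped sheaf `⟨s⟩W` on a poset `S`: its value at `t` is `W` if `t ≤ s` and `0`
otherwise; the structure map for `t ≤ t' ≤ s` is the identity of `W`, and all other structure
maps are zero. -/
noncomputable def coneSheaf (s : S) (W : V) : S ⥤ V where
  obj t := if t ≤ s then W else 0
  map {t t'} f :=
    if h' : t' ≤ s then
      eqToHom (by (try dsimp only); rw [if_pos (le_trans (leOfHom f) h'), if_pos h'])
    else 0
  map_id t := by
    by_cases h : t ≤ s
    · try dsimp only
      rw [dif_pos h]
      simp
    · exact ((isZero_zero V).of_iso (eqToIso (if_neg h))).eq_of_src _ _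
  map_comp {t t' t''} f g := by
    by_cases h'' : t'' ≤ s
    · have h' : t' ≤ s := le_trans (leOfHom g) h''
      try dsimp only
      rw [dif_pos h'', dif_pos h'', dif_pos h', eqToHom_trans]
    · exact ((isZero_zero V).of_iso (eqToIso (if_neg h''))).eq_of_tgt _ _

section

variable (s : S) (W : V)

lemma coneSheaf_obj_of_le {t : S} (h : t ≤ s) : (coneSheaf s W).obj t = W :=
  if_pos h

lemma coneSheaf_isZero_obj {t : S} (h : ¬ t ≤ s) :
    IsZero ((coneSheaf s W).obj t) :=
  (isZero_zero V).of_iso (eqToIso (if_neg h))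

lemma coneSheaf_map_comp_eqToHom {t t' : S} (f : t ⟶ t') (h : t' ≤ s) :
    (coneSheaf s W).map f ≫ eqToHom (coneSheaf_obj_of_le s W h) =
      eqToHom (coneSheaf_obj_of_le s W (f.le.trans h)) := by
  simp only [coneSheaf, dif_pos h]
  exact eqToHom_trans _ _

noncomputable def coneSheafToEvaluationRightAdjointObj :
    coneSheaf s W ⟶ (evaluationRightAdjoint V s).obj W where
  app t := Pi.lift fun g => eqToHom (coneSheaf_obj_of_le s W g.le)
  naturality t t' f := by
    refine Pi.hom_ext _ _ fun g => ?_
    dsimp only [evaluationRightAdjoint]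
    simpa using coneSheaf_map_comp_eqToHom s W f g.le

instance isIso_coneSheafToEvaluationRightAdjointObj :
    IsIso (coneSheafToEvaluationRightAdjointObj s W) := by
  rw [NatTrans.isIso_iff_isIso_app]
  intro t
  by_cases h : t ≤ s
  · refine ⟨Pi.π _ (homOfLE h) ≫ eqToHom (coneSheaf_obj_of_le s W h).symm, ?_,
      Pi.hom_ext _ _ fun g => ?_⟩
    all_goals dsimp only [coneSheafToEvaluationRightAdjointObj, evaluationRightAdjoint]
    · simp
    · obtain rfl : g = homOfLE h := Subsingleton.elim _ _
      simp
  · refine (coneSheaf_isZero_obj s W h).isIso ?_ _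
    rw [IsZero.iff_id_eq_zero]
    exact Pi.hom_ext _ _ fun g => (h g.le).elim

end

/-- If `W` is an injective object of the abelian category `V`, then the
cone-shaped sheaf `⟨s⟩W` is an injective object of the category of diagrams `S ⥤ V`. -/
theorem coneSheaf_injective (s : S) (W : V) [Injective W] :
    Injective (coneSheaf s W) :=
  Injective.of_iso (asIso (coneSheafToEvaluationRightAdjointObj s W)).symm
    ((evaluationAdjunctionLeft V s).map_injective W inferInstance)
end

section
/- Let X and Y be sober topological spaces. If there is an equivalence of categories between the category of Type-valued (set-valued) sheaves on X and the category of Type-valued sheaves on Y, then X and Y are homeomorphic. -/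
/-!
A sheaf of types is subterminal exactly when all its sets of sections are subsingletons, and such
a sheaf on `X` is the sheaf represented by the union of the opens over which it has a section.
So the subterminal sheaves form a category equivalent to the frame `Opens X`, and an equivalence
of sheaf categories induces an order isomorphism `Opens X ≃o Opens Y`. In a sober `T₀` space the
points correspond to the prime opens (complements of point closures), which any order isomorphism
preserves; the resulting bijection `X ≃ Y` pulls each open `V` back to `f.symm V`.
-/

open CategoryTheory TopologicalSpace Opposite

universe u v

noncomputable section

namespace CategoryTheory

variable {C D : Type*} [Category C] [Category D]

instance : ObjectProperty.IsClosedUnderIsomorphisms (fun A : C => IsSubterminal A) where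
  of_iso i hA _ f g := by simpa using congrArg (· ≫ i.hom) (hA (f ≫ i.inv) (g ≫ i.inv))

instance : Quiver.IsThin (Subterminals C) := fun _ B =>
  ⟨fun f g => ObjectProperty.hom_ext _ (B.2 f.hom g.hom)⟩

theorem Equivalence.isSubterminal_functor_obj_iff (e : C ≌ D) {A : C} :
    IsSubterminal (e.functor.obj A) ↔ IsSubterminal A := by
  refine ⟨fun h Z f g => e.functor.map_injective (h _ _), fun h W f g => ?_⟩
  apply e.inverse.map_injective
  simpa using congrArg (· ≫ e.unitIso.hom.app A)
    (h (e.inverse.map f ≫ e.unitIso.inv.app A) (e.inverse.map g ≫ e.unitIso.inv.app A))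

def Equivalence.subterminalsCongr (e : C ≌ D) : Subterminals C ≌ Subterminals D :=
  e.congrFullSubcategory (by ext A; exact e.isSubterminal_functor_obj_iff)

end CategoryTheory

namespace CategoryTheory.GrothendieckTopology

variable {C : Type u} [Category.{v} C] (J : GrothendieckTopology C) [J.Subcanonical]

theorem isSubterminal_yoneda_obj [Quiver.IsThin C] (U : C) : IsSubterminal (J.yoneda.obj U) := by
  intro Z f g
  ext V s
  exact Subsingleton.elim (α := V.unop ⟶ U) _ _

theorem subsingleton_obj_of_isSubterminal {F : Sheaf J (Type v)} (hF : IsSubterminal F) (U : C) :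
    Subsingleton (F.obj.obj (op U)) :=
  ⟨fun _ _ => J.yonedaEquiv.symm.injective (hF _ _)⟩

end CategoryTheory.GrothendieckTopology

instance Opens.subcanonical_grothendieckTopology (T : Type u) [TopologicalSpace T] :
    (Opens.grothendieckTopology T).Subcanonical := by
  refine .of_isSheaf_yoneda_obj _ fun U => ?_
  rw [← isSheaf_iff_isSheaf_of_type]
  refine (TopCat.Presheaf.isSheaf_iff_isSheafUniqueGluing_types (X := .of T) (yoneda.obj U)).mpr
    fun _ V sf _ => ?_
  exact ⟨homOfLE (iSup_le fun i => (sf i).le), fun _ => rfl, fun _ _ => rfl⟩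

namespace TopCat.Sheaf

variable {X : TopCat.{u}}

def support (F : TopCat.Sheaf (Type u) X) : Opens X :=
  ⨆ U : {U : Opens X // Nonempty (F.obj.obj (op U))}, U.1

theorem le_support {F : TopCat.Sheaf (Type u) X} {U : Opens X} (s : F.obj.obj (op U)) :
    U ≤ F.support :=
  le_iSup (fun U : {U : Opens X // Nonempty (F.obj.obj (op U))} => U.1) ⟨U, ⟨s⟩⟩

theorem nonempty_obj_of_le_support {F : TopCat.Sheaf (Type u) X} (hF : IsSubterminal F)
    {U : Opens X} (hU : U ≤ F.support) : Nonempty (F.obj.obj (op U)) := by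
  let ι := {W : Opens X // Nonempty (F.obj.obj (op W))}
  have hcover : U = ⨆ W : ι, U ⊓ W.1 := (inf_eq_left.mpr hU).symm.trans (inf_iSup_eq _ _)
  let sf (W : ι) : F.obj.obj (op (U ⊓ W.1)) := F.obj.map (homOfLE inf_le_right).op W.2.some
  have := (Opens.grothendieckTopology X).subsingleton_obj_of_isSubterminal hF
  obtain ⟨s, -⟩ := (TopCat.Presheaf.isSheaf_iff_isSheafUniqueGluing_types F.obj).mp F.property
    _ sf fun _ _ => Subsingleton.elim _ _
  exact hcover ▸ ⟨s⟩

def toYonedaSupport (F : TopCat.Sheaf (Type u) X) :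
    F ⟶ (Opens.grothendieckTopology X).yoneda.obj F.support :=
  ⟨{ app V := TypeCat.ofHom fun s => homOfLE (le_support s)
     naturality _ W _ := by ext; exact Subsingleton.elim (α := W.unop ⟶ F.support) _ _ }⟩

def ofYonedaSupport {F : TopCat.Sheaf (Type u) X} (hF : IsSubterminal F) :
    (Opens.grothendieckTopology X).yoneda.obj F.support ⟶ F :=
  ⟨{ app _ := TypeCat.ofHom fun h => (nonempty_obj_of_le_support hF h.le).some
     naturality _ W _ := by
      have := (Opens.grothendieckTopology X).subsingleton_obj_of_isSubterminal hF W.unop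
      ext; exact Subsingleton.elim _ _ }⟩

abbrev yonedaSubterminal : Opens X ⥤ Subterminals (TopCat.Sheaf (Type u) X) :=
  ObjectProperty.lift _ (Opens.grothendieckTopology X).yoneda
    (Opens.grothendieckTopology X).isSubterminal_yoneda_obj

instance : (yonedaSubterminal (X := X)).Full where
  map_surjective f := ⟨(Opens.grothendieckTopology X).yonedaEquiv f.hom, Subsingleton.elim _ _⟩

instance : (yonedaSubterminal (X := X)).EssSurj where
  mem_essImage F := ⟨F.1.support, ⟨iso_of_both_ways (ObjectProperty.homMk (ofYonedaSupport F.2))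
    (ObjectProperty.homMk (toYonedaSupport F.1))⟩⟩

instance : (yonedaSubterminal (X := X)).IsEquivalence where

def opensEquivSubterminals : Opens X ≌ Subterminals (TopCat.Sheaf (Type u) X) :=
  yonedaSubterminal.asEquivalence

def opensOrderIsoOfEquivalence {Y : TopCat.{u}}
    (e : TopCat.Sheaf (Type u) X ≌ TopCat.Sheaf (Type u) Y) : Opens X ≃o Opens Y :=
  (opensEquivSubterminals.trans (e.subterminalsCongr.trans opensEquivSubterminals.symm)).toOrderIso

end TopCat.Sheaf

namespace OrderIso

variable {α β : Type*} [SemilatticeInf α] [SemilatticeInf β] (f : α ≃o β)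

theorem infPrime_apply {a : α} : InfPrime (f a) ↔ InfPrime a := by
  simp only [InfPrime, f.isMax_apply, f.surjective.forall, ← map_inf, f.le_iff_le]

def infPrimeEquiv : {a : α // InfPrime a} ≃ {b : β // InfPrime b} :=
  f.toEquiv.subtypeEquiv fun _ => f.infPrime_apply.symm

end OrderIso

namespace TopologicalSpace

variable {X Y : Type*} [TopologicalSpace X] [TopologicalSpace Y]

theorem Opens.infPrime_iff_isIrreducible_compl {U : Opens X} :
    InfPrime U ↔ IsIrreducible (U : Set X)ᶜ := by
  simp only [InfPrime, isMax_iff_eq_top, IsIrreducible, IsPreirreducible, Set.nonempty_compl,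
    Set.inter_comm _ (_ : Set X), Set.inter_compl_nonempty_iff, ne_eq, coe_eq_univ]
  refine and_congr_right fun _ => ⟨fun h u v hu hv hu' hv' huv => ?_, fun h b c hbc => ?_⟩
  · rcases h (b := ⟨u, hu⟩) (c := ⟨v, hv⟩) huv with h' | h'
    exacts [hu' h', hv' h']
  · by_contra! hbc'
    exact h b c b.2 c.2 hbc'.1 hbc'.2 hbc

def IrreducibleCloseds.equivInfPrimeOpens :
    IrreducibleCloseds X ≃ {U : Opens X // InfPrime U} where
  toFun S := ⟨⟨(S : Set X)ᶜ, S.isClosed.isOpen_compl⟩,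
    Opens.infPrime_iff_isIrreducible_compl.mpr (by simpa using S.isIrreducible)⟩
  invFun U :=
    ⟨(U.1 : Set X)ᶜ, Opens.infPrime_iff_isIrreducible_compl.mp U.2, U.1.isOpen.isClosed_compl⟩
  left_inv S := IrreducibleCloseds.ext (compl_compl _)
  right_inv U := Subtype.ext (Opens.ext (compl_compl _))

def pointsEquivInfPrimeOpens [QuasiSober X] [T0Space X] : X ≃ {U : Opens X // InfPrime U} :=
  irreducibleSetEquivPoints.toEquiv.symm.trans IrreducibleCloseds.equivInfPrimeOpens

theorem mem_iff_not_le_pointsEquivInfPrimeOpens [QuasiSober X] [T0Space X] {x : X}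
    {V : Opens X} : x ∈ V ↔ ¬ V ≤ (pointsEquivInfPrimeOpens x).1 := by
  change _ ↔ ¬ (V : Set X) ⊆ (closure {x})ᶜ
  rw [Set.subset_compl_comm, V.isOpen.isClosed_compl.closure_subset_iff,
    Set.singleton_subset_iff, Set.mem_compl_iff, not_not, SetLike.mem_coe]

variable [QuasiSober X] [T0Space X] [QuasiSober Y] [T0Space Y]

def pointsEquivOfOpensOrderIso (f : Opens X ≃o Opens Y) : X ≃ Y :=
  pointsEquivInfPrimeOpens.trans (f.infPrimeEquiv.trans pointsEquivInfPrimeOpens.symm)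

theorem preimage_pointsEquivOfOpensOrderIso (f : Opens X ≃o Opens Y) (V : Opens Y) :
    pointsEquivOfOpensOrderIso f ⁻¹' V = f.symm V := by
  ext x
  simp only [Set.mem_preimage, SetLike.mem_coe, mem_iff_not_le_pointsEquivInfPrimeOpens,
    pointsEquivOfOpensOrderIso, Equiv.trans_apply, Equiv.apply_symm_apply]
  exact not_congr f.symm_apply_le.symm

theorem continuous_pointsEquivOfOpensOrderIso (f : Opens X ≃o Opens Y) :
    Continuous (pointsEquivOfOpensOrderIso f) :=
  continuous_def.mpr fun s hs =>
    preimage_pointsEquivOfOpensOrderIso f ⟨s, hs⟩ ▸ (f.symm ⟨s, hs⟩).isOpen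

def _root_.Homeomorph.ofOpensOrderIso (f : Opens X ≃o Opens Y) : X ≃ₜ Y where
  toEquiv := pointsEquivOfOpensOrderIso f
  continuous_toFun := continuous_pointsEquivOfOpensOrderIso f
  continuous_invFun := continuous_pointsEquivOfOpensOrderIso f.symm

end TopologicalSpace

end

/-- STATEMENT 18: If `X` and `Y` are sober topological spaces whose categories of
type-valued sheaves are equivalent, then `X` and `Y` are homeomorphic. -/
theorem homeomorph_of_sheaf_equivalence
    (X Y : Type) [TopologicalSpace X] [TopologicalSpace Y]
    [QuasiSober X] [T0Space X] [QuasiSober Y] [T0Space Y]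
    (e : TopCat.Sheaf (Type) (TopCat.of X) ≌ TopCat.Sheaf (Type) (TopCat.of Y)) :
    Nonempty (X ≃ₜ Y) :=
  ⟨Homeomorph.ofOpensOrderIso (TopCat.Sheaf.opensOrderIsoOfEquivalence e)⟩
end
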